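/- In Definition of property (T), n can be taken arbitrarily large: if a subalgebra 𝓑 of Bor(2^ℕ) containing Clopen(2^ℕ) has property (T), then for every finite sequence A_1,…,A_p ∈ 𝓑, every ε > 0, and every N ∈ ℕ, there exists n ≥ N such that for every atom U of 𝓐_n and every i: either λ(A_i ∩ U) ≤ ελ(U)/n or λ(U \ A_i) ≤ ελ(U)/n, and for every m > n, φ_m(A_i ∩ U) ≤ ελ(U)/m. -/
import Mathlib


open MeasureTheory Set Filter

noncomputable section

/-- The Cantor space `2^ℕ`, realized as the compact group `(ℤ/2)^ℕ`. -/
abbrev Cantor : Type := ℕ → ZMod 2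

/-- The standard product (Haar) probability measure `λ` on `2^ℕ`. -/
def lam : Measure Cantor := Measure.addHaarMeasure ⊤

/-- `V m i = {x ∈ 2^ℕ : x m = i}`. -/
def V (m : ℕ) (i : ZMod 2) : Set Cantor := {x | x m = i}

/-- `φ_m(A) = |λ(A ∩ V_m^0) − λ(A ∩ V_m^1)|`. -/
def phi (m : ℕ) (A : Set Cantor) : ℝ :=
  |(lam (A ∩ V m 0)).toReal - (lam (A ∩ V m 1)).toReal|

/-- `ψ_m(A,B)`. -/
def psi (m : ℕ) (A B : Set Cantor) : ℝ :=
  |((lam (A ∩ V m 0)).toReal - (lam (A ∩ V m 1)).toReal) -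
   ((lam (B ∩ V m 0)).toReal - (lam (B ∩ V m 1)).toReal)|

/-- `U` is an atom of the algebra `𝓐_n` generated by coordinates `0,…,n`:
a basic cylinder determined by the first `n+1` coordinates. -/
def IsAtomOf (n : ℕ) (U : Set Cantor) : Prop :=
  ∃ σ : Fin (n + 1) → ZMod 2, U = {x | ∀ i : Fin (n + 1), x i = σ i}

/-- Membership in the algebra `𝓐_n`: the set depends only on coordinates `0,…,n`. -/
def MemA (n : ℕ) (S : Set Cantor) : Prop :=
  ∃ T : Set (Fin (n + 1) → ZMod 2), S = {x | (fun i : Fin (n + 1) => x i) ∈ T}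

/-- `B` is a Boolean subalgebra of `Bor(2^ℕ)`. -/
def IsBorelSubalgebra (B : Set (Set Cantor)) : Prop :=
  (∀ A ∈ B, MeasurableSet A) ∧ univ ∈ B ∧ (∀ A ∈ B, Aᶜ ∈ B) ∧
    (∀ A ∈ B, ∀ C ∈ B, A ∪ C ∈ B)

/-- `B` contains `Clopen(2^ℕ)`. -/
def ContainsClopen (B : Set (Set Cantor)) : Prop :=
  ∀ A : Set Cantor, IsClopen A → A ∈ B

/-- Property (T) of a subalgebra of `Bor(2^ℕ)`. -/
def HasPropT (B : Set (Set Cantor)) : Prop :=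
  ∀ (p : ℕ) (A : Fin p → Set Cantor), (∀ i, A i ∈ B) → ∀ ε : ℝ, 0 < ε →
    ∃ n : ℕ, 0 < n ∧ ∀ U : Set Cantor, IsAtomOf n U → ∀ i : Fin p,
      ((lam (A i ∩ U)).toReal ≤ ε * (lam U).toReal / n ∨
        (lam (U \ A i)).toReal ≤ ε * (lam U).toReal / n) ∧
      ∀ m : ℕ, n < m → phi m (A i ∩ U) ≤ ε * (lam U).toReal / m

instance : lam.IsAddHaarMeasure := by unfold lam; infer_instance
instance : IsProbabilityMeasure lam := by
  constructor
  have := Measure.addHaarMeasure_self (K₀ := (⊤ : TopologicalSpace.PositiveCompacts Cantor))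
  rwa [TopologicalSpace.PositiveCompacts.coe_top] at this

lemma V_clopen (m : ℕ) (i : ZMod 2) : IsClopen (V m i) :=
  (isClopen_discrete {i}).preimage (continuous_apply m)

lemma atom_eq_iInter {n : ℕ} (σ : Fin (n+1) → ZMod 2) :
    {x : Cantor | ∀ i : Fin (n+1), x i = σ i} = ⋂ i : Fin (n+1), V (i : ℕ) (σ i) := by
  ext x; simp [V]

lemma atom_measurableSet {n : ℕ} {U : Set Cantor} (h : IsAtomOf n U) : MeasurableSet U := by
  obtain ⟨σ, rfl⟩ := h
  rw [atom_eq_iInter]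
  exact MeasurableSet.iInter fun i => (V_clopen _ _).isOpen.measurableSet

lemma atom_pos {n : ℕ} {U : Set Cantor} (h : IsAtomOf n U) : 0 < (lam U).toReal := by
  obtain ⟨σ, rfl⟩ := h
  have hopen : IsOpen {x : Cantor | ∀ i : Fin (n+1), x i = σ i} := by
    rw [atom_eq_iInter]
    exact isOpen_iInter_of_finite fun i => (V_clopen _ _).isOpen
  have hne : ({x : Cantor | ∀ i : Fin (n+1), x i = σ i}).Nonempty := by
    refine ⟨fun m => if h : m < n+1 then σ ⟨m, h⟩ else 0, ?_⟩
    intro i; simp [i.isLt]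
  exact ENNReal.toReal_pos (hopen.measure_pos lam hne).ne' (measure_ne_top _ _)

lemma atom_half {n Nc : ℕ} (hlt : n < Nc) {U : Set Cantor} (hU : IsAtomOf n U) :
    (lam (V Nc 0 ∩ U)).toReal = (lam U).toReal / 2 ∧
    (lam (U \ V Nc 0)).toReal = (lam U).toReal / 2 := by
  have hUm : MeasurableSet U := atom_measurableSet hU
  obtain ⟨σ, hUdef⟩ := hU
  have hdiff : U \ V Nc 0 = V Nc 1 ∩ U := by
    have h01 : ∀ a : ZMod 2, (¬ a = 0) ↔ a = 1 := by decide
    ext x; simp only [mem_diff, mem_inter_iff, V, mem_setOf_eq, h01]; tauto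
  have heq : lam (V Nc 0 ∩ U) = lam (V Nc 1 ∩ U) := by
    set e : Cantor := fun m => if m = Nc then 1 else 0 with he
    have key : (fun x : Cantor => e + x) ⁻¹' (V Nc 1 ∩ U) = V Nc 0 ∩ U := by
      subst hUdef
      have hN : e Nc = 1 := if_pos rfl
      have hi : ∀ i : Fin (n+1), e (i:ℕ) = 0 := fun i => if_neg (by have := i.isLt; omega)
      have h1 : ∀ a : ZMod 2, 1 + a = 1 ↔ a = 0 := by decide
      ext x
      simp only [mem_preimage, mem_inter_iff, V, mem_setOf_eq, Pi.add_apply, hN, hi,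
        zero_add, h1]
    rw [← key, measure_preimage_add]
  have hsplit : lam U = lam (V Nc 0 ∩ U) + lam (V Nc 1 ∩ U) := by
    have hcover : U = (V Nc 0 ∩ U) ∪ (V Nc 1 ∩ U) := by
      ext x; simp only [mem_union, mem_inter_iff, V, mem_setOf_eq]
      have := (show ∀ a : ZMod 2, a = 0 ∨ a = 1 by decide) (x Nc)
      tauto
    have hd : Disjoint (V Nc 0 ∩ U) (V Nc 1 ∩ U) := by
      refine Set.disjoint_left.2 fun x hx hx' => ?_
      exact absurd (hx.1.symm.trans hx'.1) (by decide)
    conv_lhs => rw [hcover]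
    exact measure_union hd ((V_clopen Nc 1).isOpen.measurableSet.inter hUm)
  have hfin : ∀ S : Set Cantor, lam S ≠ ⊤ := fun S => measure_ne_top lam S
  have h2 := congrArg ENNReal.toReal hsplit
  rw [ENNReal.toReal_add (hfin _) (hfin _)] at h2
  have h3 := congrArg ENNReal.toReal heq
  rw [hdiff]
  constructor <;> linarith

theorem stmt19 (B : Set (Set Cantor)) (hB : IsBorelSubalgebra B)
    (hclopen : ContainsClopen B) (hT : HasPropT B) :
    ∀ (p : ℕ) (A : Fin p → Set Cantor), (∀ i, A i ∈ B) → ∀ ε : ℝ, 0 < ε → ∀ N : ℕ,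
      ∃ n : ℕ, N ≤ n ∧ 0 < n ∧ ∀ U : Set Cantor, IsAtomOf n U → ∀ i : Fin p,
        ((lam (A i ∩ U)).toReal ≤ ε * (lam U).toReal / n ∨
          (lam (U \ A i)).toReal ≤ ε * (lam U).toReal / n) ∧
        ∀ m : ℕ, n < m → phi m (A i ∩ U) ≤ ε * (lam U).toReal / m := by
  intro p A hA ε hε N
  set ε' : ℝ := min ε (1/4) with hε'def
  have hε'pos : 0 < ε' := lt_min hε (by norm_num)
  have hε'le : ε' ≤ ε := min_le_left _ _
  have hε'14 : ε' ≤ 1/4 := min_le_right _ _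
  have hA' : ∀ i : Fin (p+1), (Fin.snoc A (V N 0) : Fin (p+1) → Set Cantor) i ∈ B := by
    intro i
    refine Fin.lastCases ?_ ?_ i
    · rw [Fin.snoc_last]; exact hclopen _ (V_clopen N 0)
    · intro j; rw [Fin.snoc_castSucc]; exact hA j
  obtain ⟨n, hn, hcond⟩ := hT (p+1) (Fin.snoc A (V N 0) : Fin (p+1) → Set Cantor) hA' ε' hε'pos
  have hn1 : (1:ℝ) ≤ (n:ℝ) := by exact_mod_cast hn
  have hNn : N ≤ n := by
    by_contra hlt
    push_neg at hlt
    have hatom : IsAtomOf n {x : Cantor | ∀ i : Fin (n+1), x i = (0 : ZMod 2)} :=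
      ⟨0, by simp⟩
    set U : Set Cantor := {x : Cantor | ∀ i : Fin (n+1), x i = (0 : ZMod 2)}
    set t : ℝ := (lam U).toReal with htdef
    have ht : 0 < t := atom_pos hatom
    obtain ⟨hhalf0, hhalf1⟩ := atom_half hlt hatom
    have := (hcond U hatom (Fin.last p)).1
    rw [Fin.snoc_last] at this
    have key : t / 2 ≤ ε' * t / n := by
      rcases this with h | h
      · rw [hhalf0] at h; exact h
      · rw [hhalf1] at h; exact h
    have h2 : ε' * t / n ≤ ε' * t := div_le_self (by positivity) hn1
    have h3 : ε' * t ≤ (1/4) * t := mul_le_mul_of_nonneg_right hε'14 ht.le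
    linarith
  refine ⟨n, hNn, hn, fun U hU i => ?_⟩
  have h := hcond U hU i.castSucc
  rw [Fin.snoc_castSucc] at h
  obtain ⟨hmain, hphi⟩ := h
  have htU : (0:ℝ) ≤ (lam U).toReal := ENNReal.toReal_nonneg
  constructor
  · rcases hmain with h | h
    · left
      refine h.trans ?_
      gcongr
    · right
      refine h.trans ?_
      gcongr
  · intro m hm
    refine (hphi m hm).trans ?_
    gcongr
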